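/- There exists a scalar product on H₁(Γ, ℝ) such that for the canonical cocycle ω = ω(Γ,λ), ⟨ω(e), ω(e')⟩ ≤ 0 for any two distinct half-edges e, e' that either have the same source, or whose sources are connected by a path disjoint from e, e' all of whose edges have less than maximal length. -/

import Mathlib

open Finset

/-- A finite graph: vertices, half-edges with a free involution, and a target map. -/
structure FinGraph where
  V : Type
  H : Type
  [fV : Fintype V]
  [fH : Fintype H]
  [dV : DecidableEq V]
  [dH : DecidableEq H]
  bar : H → H
  bar_invol : ∀ e, bar (bar e) = e
  bar_ne : ∀ e, bar e ≠ e
  tar : H → V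

attribute [instance] FinGraph.fV FinGraph.fH FinGraph.dV FinGraph.dH

namespace FinGraph

variable (G : FinGraph)

/-- The source of a half-edge is the target of its other half. -/
def src (e : G.H) : G.V := G.tar (G.bar e)

/-- One step along a half-edge belonging to the allowed set `A`. -/
def Step (A : Set G.H) (v w : G.V) : Prop := ∃ e, e ∈ A ∧ G.src e = v ∧ G.tar e = w

/-- Reachability using only half-edges in `A`. -/
def ReachIn (A : Set G.H) (v w : G.V) : Prop := Relation.ReflTransGen (G.Step A) v w

/-- The graph is connected. -/
def Connected : Prop := ∀ v w : G.V, G.ReachIn Set.univ v w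

/-- The valence of a vertex: the number of half-edges incident to it. -/
def valence (v : G.V) : ℕ := (univ.filter (fun e => G.tar e = v)).card

/-- An edge `{e, ē}` is separating if deleting it disconnects the graph. -/
def IsSeparating (e : G.H) : Prop :=
  ¬ ∀ v w : G.V, G.ReachIn {h | h ≠ e ∧ h ≠ G.bar e} v w

/-- The graph has first Betti number (rank) `n`; for a connected graph this
says `#edges = #vertices + n - 1`, i.e. `#H + 2 = 2(#V + n)`. -/
def HasRank (n : ℕ) : Prop := Fintype.card G.H + 2 = 2 * (Fintype.card G.V + n)

end FinGraph

namespace FinGraph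

variable (G : FinGraph)

/-- A balanced 1-cocycle with values in an additive group. -/
def IsBalanced {W : Type*} [AddCommGroup W] (ω : G.H → W) : Prop :=
  (∀ e, ω (G.bar e) = - ω e) ∧
  ∀ v : G.V, ∑ e ∈ univ.filter (fun e => G.tar e = v), ω e = 0

/-- The space `Ω¹(Γ, V)` of balanced `V`-valued 1-cocycles. -/
def Omega (W : Type*) [AddCommGroup W] [Module ℝ W] : Submodule ℝ (G.H → W) where
  carrier := {ω | G.IsBalanced ω}
  zero_mem' := ⟨fun e => by simp, fun v => by simp⟩
  add_mem' := by
    intro a b ha hb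
    refine ⟨fun e => ?_, fun v => ?_⟩
    · simp only [Pi.add_apply, ha.1 e, hb.1 e]; abel
    · simp only [Pi.add_apply, Finset.sum_add_distrib, ha.2 v, hb.2 v, add_zero]
  smul_mem' := by
    intro r a ha
    refine ⟨fun e => ?_, fun v => ?_⟩
    · simp only [Pi.smul_apply, ha.1 e, smul_neg]
    · simp only [Pi.smul_apply, ← Finset.smul_sum, ha.2 v, smul_zero]

/-- The group of 1-cycles (the model for `H₁(Γ)`): antisymmetric integer functions
on half-edges with vanishing vertex sums. -/
def cycles : AddSubgroup (G.H → ℤ) where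
  carrier := {c | G.IsBalanced c}
  zero_mem' := ⟨fun e => by simp, fun v => by simp⟩
  add_mem' := by
    intro a b ha hb
    refine ⟨fun e => ?_, fun v => ?_⟩
    · simp only [Pi.add_apply, ha.1 e, hb.1 e]; abel
    · simp only [Pi.add_apply, Finset.sum_add_distrib, ha.2 v, hb.2 v, add_zero]
  neg_mem' := by
    intro a ha
    refine ⟨fun e => ?_, fun v => ?_⟩
    · simp only [Pi.neg_apply, ha.1 e]
    · simp only [Pi.neg_apply, Finset.sum_neg_distrib, ha.2 v, neg_zero]

/-- A spanning (maximal) tree, given as a `bar`-closed set of half-edges. -/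
def IsSpanningTree (S : Finset G.H) : Prop :=
  (∀ e ∈ S, G.bar e ∈ S) ∧ (∀ v w : G.V, G.ReachIn ↑S v w) ∧
    S.card + 2 = 2 * Fintype.card G.V

/-- `es` is a choice of one half-edge from each of the `r` edges not in `S`. -/
def IsComplement (S : Finset G.H) {r : ℕ} (es : Fin r → G.H) : Prop :=
  (∀ i, es i ∉ S) ∧ ∀ e ∉ S, ∃! i, e = es i ∨ e = G.bar (es i)

/-- `ω` is nonsingular: its values span an `r`-dimensional subspace. -/
def Nonsingular {W : Type*} [AddCommGroup W] [Module ℝ W] (ω : G.H → W) (r : ℕ) : Prop :=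
  Module.finrank ℝ ↥(Submodule.span ℝ (Set.range ω)) = r

/-- A length function on the graph. -/
def IsLengthFunction (lam : G.H → ℝ) : Prop :=
  (∀ e, 0 ≤ lam e ∧ lam e ≤ 1/2) ∧ (∀ e, lam (G.bar e) = lam e) ∧
    ∀ c ∈ G.cycles, c ≠ 0 → ∃ e, c e ≠ 0 ∧ lam e = 1/2

end FinGraph


/-!
The short edges contain no cycle, since every nonzero cycle has an edge of maximal length; extend
them to a spanning tree `T` and pick one half-edge `eₖ` of every edge outside `T`. A balanced
cocycle is determined by its values at the `eₖ` through the fundamental cycles `zₖ`: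
`ω(e) = ∑ₖ zₖ(e) ω(eₖ)`. The canonical cocycle maps the cycles into the span of the `ω(eₖ)`, and
the `zₖ` are `r` independent cycles, so the `ω(eₖ)` are linearly independent; declare them
orthonormal. Then `⟨ω(e), ω(e')⟩ = ∑ₖ zₖ(e) zₖ(e')`, and each term is `≤ 0`: cutting `T` at a
tree edge traversed by `zₖ` separates the ends of `eₖ`, which is incompatible with `zₖ` traversing
`e` and `e'` in the same direction while their sources are joined inside `T` avoiding both.
-/

theorem LinearIndependent.of_span_le {ι K V : Type*} [Fintype ι] [Field K] [AddCommGroup V]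
    [Module K V] {u v : ι → V} (hu : LinearIndependent K u)
    (huv : Submodule.span K (Set.range u) ≤ Submodule.span K (Set.range v)) :
    LinearIndependent K v := by
  have := FiniteDimensional.span_of_finite K (Set.finite_range v)
  exact linearIndependent_iff_card_eq_finrank_span.2 <| le_antisymm
    (finrank_span_eq_card hu ▸ Submodule.finrank_mono huv) (finrank_range_le_card v)

theorem LinearIndependent.exists_bilin_orthonormal {ι V : Type*} [Fintype ι] [AddCommGroup V]
    [Module ℝ V] {v : ι → V} (hv : LinearIndependent ℝ v) :
    ∃ B : V →ₗ[ℝ] V →ₗ[ℝ] ℝ, (∀ x y, B x y = B y x) ∧ (∀ x, 0 ≤ B x x) ∧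
      (∀ x ∈ Submodule.span ℝ (Set.range v), x ≠ 0 → 0 < B x x) ∧
      ∀ a b : ι → ℝ, B (∑ i, a i • v i) (∑ i, b i • v i) = ∑ i, a i * b i := by
  obtain ⟨g, hg⟩ := LinearMap.exists_leftInverse_of_injective (Fintype.linearCombination ℝ v)
    (LinearMap.ker_eq_bot.2 (linearIndependent_iff_injective_fintypeLinearCombination.1 hv))
  have hgv (a : ι → ℝ) : g (∑ i, a i • v i) = a := by
    simpa [Fintype.linearCombination_apply] using LinearMap.congr_fun hg a
  have hnonneg (a : ι → ℝ) : 0 ≤ a ⬝ᵥ a := by simpa using dotProduct_star_self_nonneg a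
  refine ⟨(dotProductBilin ℝ ℝ).compl₁₂ g g, fun x y => dotProduct_comm _ _,
    fun x => hnonneg (g x), fun x hx hx0 => ?_, fun a b => ?_⟩
  · obtain ⟨a, rfl⟩ := (Submodule.mem_span_range_iff_exists_fun ℝ).1 hx
    have ha : a ≠ 0 := by rintro rfl; simp at hx0
    simp only [LinearMap.compl₁₂_apply, dotProductBilin_apply_apply, hgv]
    exact (hnonneg a).lt_of_ne (Ne.symm (dotProduct_self_eq_zero.not.2 ha))
  · simp only [LinearMap.compl₁₂_apply, dotProductBilin_apply_apply, hgv, dotProduct]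

namespace FinGraph

variable {G : FinGraph}

@[simp] theorem bar_bar (h : G.H) : G.bar (G.bar h) = h := G.bar_invol h

@[simp] theorem src_bar (h : G.H) : G.src (G.bar h) = G.tar h := by
  rw [src, bar_bar]

@[simp] theorem tar_bar (h : G.H) : G.tar (G.bar h) = G.src h := rfl

theorem bar_eq_iff {h h' : G.H} : G.bar h = h' ↔ h = G.bar h' := by
  constructor <;> rintro rfl <;> simp

@[simp] theorem bar_inj {h h' : G.H} : G.bar h = G.bar h' ↔ h = h' := by
  rw [bar_eq_iff, bar_bar]

variable (G) in
def BarClosed (A : Set G.H) : Prop := ∀ h ∈ A, G.bar h ∈ A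

variable (G) in
def deleteEdge (A : Set G.H) (y : G.H) : Set G.H := {h | h ∈ A ∧ h ≠ y ∧ h ≠ G.bar y}

theorem BarClosed.deleteEdge {A : Set G.H} (hA : G.BarClosed A) (y : G.H) :
    G.BarClosed (G.deleteEdge A y) := fun _ ⟨hh, hy, hy'⟩ =>
  ⟨hA _ hh, by rwa [Ne, bar_eq_iff], by rwa [Ne, bar_inj]⟩

theorem BarClosed.insert_edge {A : Set G.H} (hA : G.BarClosed A) (x : G.H) :
    G.BarClosed (insert x (insert (G.bar x) A)) := by
  rintro h (rfl | rfl | hh)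
  · exact Set.mem_insert_of_mem _ (Set.mem_insert _ _)
  · simp
  · exact Set.mem_insert_of_mem _ (Set.mem_insert_of_mem _ (hA h hh))

section Reach

variable {A B : Set G.H} {a v w : G.V} {x : G.H}

theorem subset_deleteEdge_deleteEdge {T : Set G.H} (hAT : A ⊆ T) (e e' : G.H) :
    {h | h ∉ ({e, G.bar e, e', G.bar e'} : Set G.H) ∧ h ∈ A} ⊆
      G.deleteEdge (G.deleteEdge T e) e' := by
  rintro x ⟨hx, hxA⟩
  simp only [Set.mem_insert_iff, Set.mem_singleton_iff, not_or] at hx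
  exact ⟨⟨hAT hxA, hx.1, hx.2.1⟩, hx.2.2.1, hx.2.2.2⟩

theorem reachIn_refl : G.ReachIn A v v := Relation.ReflTransGen.refl

theorem ReachIn.trans (h₁ : G.ReachIn A a v) (h₂ : G.ReachIn A v w) : G.ReachIn A a w :=
  Relation.ReflTransGen.trans h₁ h₂

theorem ReachIn.mono (hAB : A ⊆ B) (h : G.ReachIn A v w) : G.ReachIn B v w :=
  Relation.ReflTransGen.mono (fun _ _ ⟨x, hx, hs, ht⟩ => ⟨x, hAB hx, hs, ht⟩) _ _ h

theorem ReachIn.tail (h : G.ReachIn A a (G.src x)) (hx : x ∈ A) : G.ReachIn A a (G.tar x) :=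
  Relation.ReflTransGen.tail h ⟨x, hx, rfl, rfl⟩

theorem ReachIn.tail_bar (h : G.ReachIn A a (G.tar x)) (hx : G.bar x ∈ A) :
    G.ReachIn A a (G.src x) := by
  simpa using ReachIn.tail (x := G.bar x) (by simpa using h) hx

theorem reachIn_src_tar (hx : x ∈ A) : G.ReachIn A (G.src x) (G.tar x) := reachIn_refl.tail hx

theorem ReachIn.symm (hA : G.BarClosed A) (h : G.ReachIn A v w) : G.ReachIn A w v := by
  induction h with
  | refl => exact reachIn_refl
  | tail _ step ih =>
    obtain ⟨x, hx, rfl, rfl⟩ := step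
    exact (reachIn_refl.tail_bar (hA x hx)).trans ih

theorem ReachIn.of_forall_step (hAB : ∀ x ∈ A, G.ReachIn B (G.src x) (G.tar x))
    (h : G.ReachIn A v w) : G.ReachIn B v w := by
  induction h with
  | refl => exact reachIn_refl
  | tail _ step ih =>
    obtain ⟨x, hx, rfl, rfl⟩ := step
    exact ih.trans (hAB x hx)

theorem ReachIn.mono_of_reachIn (h : G.ReachIn A a w)
    (hAB : ∀ x ∈ A, G.ReachIn A a (G.src x) → x ∈ B) : G.ReachIn B a w := by
  induction h with
  | refl => exact reachIn_refl
  | tail hprev step ih =>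
    obtain ⟨x, hx, rfl, rfl⟩ := step
    exact ih.tail (hAB x hx hprev)

end Reach

variable (G) in
def inflow {M : Type*} [AddCommGroup M] (m : G.H → M) (v : G.V) : M :=
  ∑ e ∈ univ.filter (fun e => G.tar e = v), m e

section Inflow

variable {M : Type*} [AddCommGroup M]

theorem inflow_add (m m' : G.H → M) (v : G.V) :
    G.inflow (m + m') v = G.inflow m v + G.inflow m' v :=
  Finset.sum_add_distrib

theorem inflow_sub (m m' : G.H → M) (v : G.V) :
    G.inflow (m - m') v = G.inflow m v - G.inflow m' v :=
  Finset.sum_sub_distrib _ _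

theorem IsBalanced.inflow_eq_zero {c : G.H → M} (hc : G.IsBalanced c) (v : G.V) :
    G.inflow c v = 0 :=
  hc.2 v

theorem IsBalanced.map {M' : Type*} [AddCommGroup M'] {c : G.H → M} (hc : G.IsBalanced c)
    (f : M →+ M') : G.IsBalanced (f ∘ c) :=
  ⟨fun e => by simp [hc.1 e], fun v => by
    simp only [Function.comp_apply, ← map_sum, hc.2 v, map_zero]⟩

theorem IsBalanced.intCast_smul {W : Type*} [AddCommGroup W] [Module ℝ W] {c : G.H → ℤ}
    (hc : G.IsBalanced c) (w : W) : G.IsBalanced fun h => (c h : ℝ) • w :=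
  ⟨fun e => by simp [hc.1 e], fun v => by
    rw [← Finset.sum_smul, ← Int.cast_sum, hc.2 v, Int.cast_zero, zero_smul]⟩

theorem IsBalanced.bar_ne_of_pos {c : G.H → ℤ} (hc : G.IsBalanced c) {e e' : G.H}
    (he : 0 < c e) (he' : 0 < c e') : G.bar e ≠ e' := by
  rintro rfl
  rw [hc.1] at he'
  omega

theorem sum_enter_eq_sum_inflow {m : G.H → M} (hm : ∀ h, m (G.bar h) = -m h) (S : Finset G.V) :
    ∑ h ∈ univ.filter (fun h => G.tar h ∈ S ∧ G.src h ∉ S), m h = ∑ v ∈ S, G.inflow m v := by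
  have hinside : ∑ h ∈ univ.filter (fun h => G.tar h ∈ S ∧ G.src h ∈ S), m h = 0 :=
    Finset.sum_involution (fun h _ => G.bar h) (fun h _ => by rw [hm, add_neg_cancel])
      (fun h _ _ => G.bar_ne h) (fun h hh => by simpa [and_comm] using hh) (fun h _ => bar_bar h)
  have hsplit := Finset.sum_filter_add_sum_filter_not (univ.filter fun h => G.tar h ∈ S)
    (fun h => G.src h ∈ S) m
  simp only [Finset.filter_filter, hinside, zero_add] at hsplit
  simp only [inflow, hsplit, Finset.sum_fiberwise_eq_sum_filter]

theorem sum_inflow_reachIn {m : G.H → M} (hm : ∀ h, m (G.bar h) = -m h) {A : Set G.H} {a : G.V}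
    {x : G.H} [DecidablePred (G.ReachIn A a)] (hxa : G.ReachIn A a (G.tar x))
    (hxs : ¬ G.ReachIn A a (G.src x))
    (hzero : ∀ h ≠ x, G.bar h ∉ A → G.ReachIn A a (G.tar h) → ¬ G.ReachIn A a (G.src h) →
      m h = 0) :
    ∑ v ∈ univ.filter (G.ReachIn A a), G.inflow m v = m x := by
  rw [← sum_enter_eq_sum_inflow hm]
  refine Finset.sum_eq_single_of_mem x (by simp [hxa, hxs]) fun h hh hhx => ?_
  simp only [Finset.mem_filter, Finset.mem_univ, true_and] at hh
  exact hzero h hhx (fun hbar => hh.2 (hh.1.tail_bar hbar)) hh.1 hh.2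

end Inflow

variable (G) in
def unitFlow (x : G.H) : G.H → ℤ := Pi.single x 1 - Pi.single (G.bar x) 1

theorem unitFlow_self (x : G.H) : G.unitFlow x x = 1 := by
  simp [unitFlow, (G.bar_ne x).symm]

theorem unitFlow_apply_of_ne {x y : G.H} (h₁ : y ≠ x) (h₂ : y ≠ G.bar x) : G.unitFlow x y = 0 := by
  simp [unitFlow, h₁, h₂]

theorem unitFlow_nonneg {x y : G.H} (h : y ≠ G.bar x) : 0 ≤ G.unitFlow x y := by
  simp only [unitFlow, Pi.sub_apply, Pi.single_apply, h, if_false, sub_zero]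
  split_ifs <;> norm_num

theorem eq_of_one_le_unitFlow {x y : G.H} (h : 1 ≤ G.unitFlow x y) : y = x := by
  by_contra hyx
  simp only [unitFlow, Pi.sub_apply, Pi.single_apply, hyx, if_false, zero_sub] at h
  split_ifs at h <;> omega

theorem unitFlow_apply_bar (x y : G.H) : G.unitFlow x (G.bar y) = -G.unitFlow x y := by
  simp only [unitFlow, Pi.sub_apply, Pi.single_apply, bar_eq_iff, bar_bar]
  abel

theorem unitFlow_bar (x : G.H) : G.unitFlow (G.bar x) = -G.unitFlow x := by
  simp only [unitFlow, bar_bar, neg_sub]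

theorem inflow_unitFlow (x : G.H) (v : G.V) :
    G.inflow (G.unitFlow x) v =
      (if G.tar x = v then 1 else 0) - (if G.src x = v then 1 else 0) := by
  simp [inflow, unitFlow, Finset.sum_sub_distrib, Finset.sum_pi_single']

theorem exists_flow_of_reachIn {A : Set G.H} {v w : G.V} (h : G.ReachIn A v w) :
    ∃ g : G.H → ℤ, (∀ x, g (G.bar x) = -g x) ∧ (∀ x, g x ≠ 0 → x ∈ A ∨ G.bar x ∈ A) ∧
      (∀ x, G.bar x ∉ A → 0 ≤ g x) ∧
      ∀ u, G.inflow g u = (if w = u then 1 else 0) - (if v = u then 1 else 0) := by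
  induction h with
  | refl => exact ⟨0, by simp, by simp, by simp, fun u => by simp [inflow]⟩
  | tail _ step ih =>
    obtain ⟨g, hanti, hsupp, hnonneg, hin⟩ := ih
    obtain ⟨x, hx, rfl, rfl⟩ := step
    refine ⟨g + G.unitFlow x, fun y => ?_, fun y hy => ?_, fun y hy => ?_, fun u => ?_⟩
    · simp only [Pi.add_apply, hanti, unitFlow_apply_bar, neg_add]
    · by_cases hgy : g y = 0
      · by_cases hyx : y = x
        · exact .inl (hyx ▸ hx)
        by_cases hyx' : y = G.bar x
        · exact .inr (by simpa [hyx'] using hx)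
        · simp [hgy, unitFlow_apply_of_ne hyx hyx'] at hy
      · exact hsupp y hgy
    · have hyx : y ≠ G.bar x := by rintro rfl; exact hy (by simpa using hx)
      exact add_nonneg (hnonneg y hy) (unitFlow_nonneg hyx)
    · rw [inflow_add, hin, inflow_unitFlow]
      abel

theorem exists_cycle_of_reachIn {A : Set G.H} {x : G.H} (h : G.ReachIn A (G.tar x) (G.src x)) :
    ∃ c : G.H → ℤ, G.IsBalanced c ∧ (∀ y ∉ A, G.bar y ∉ A → c y = G.unitFlow x y) ∧
      (G.bar x ∉ A → 1 ≤ c x) := by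
  obtain ⟨g, hanti, hsupp, hnonneg, hin⟩ := exists_flow_of_reachIn h
  refine ⟨G.unitFlow x + g, ⟨fun y => ?_, fun u => ?_⟩, fun y hy hy' => ?_, fun hx => ?_⟩
  · simp only [Pi.add_apply, hanti, unitFlow_apply_bar, neg_add]
  · change G.inflow _ u = 0
    rw [inflow_add, inflow_unitFlow, hin]
    abel
  · have hgy : g y = 0 := by_contra fun hg => (hsupp y hg).elim hy hy'
    simp [hgy]
  · simpa [unitFlow_self] using hnonneg x hx

/-- Otherwise the vertices reachable from `tar x` along positive half-edges would receive a
positive net flow. -/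
theorem IsBalanced.reachIn_pos {c : G.H → ℝ} (hc : G.IsBalanced c) {x : G.H} (hx : 0 < c x) :
    G.ReachIn {h | 0 < c h} (G.tar x) (G.src x) := by
  classical
  by_contra hne
  have hcut := sum_enter_eq_sum_inflow hc.1 (univ.filter (G.ReachIn {h | 0 < c h} (G.tar x)))
  rw [Finset.sum_eq_zero fun v _ => hc.inflow_eq_zero v] at hcut
  refine (Finset.sum_pos' (fun h hh => ?_) ⟨x, ?_, hx⟩).ne' hcut
  · simp only [Finset.mem_filter, Finset.mem_univ, true_and] at hh
    by_contra hneg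
    have hbar : 0 < c (G.bar h) := by rw [hc.1]; linarith
    exact hh.2 (hh.1.tail_bar hbar)
  · simpa [hne] using reachIn_refl

theorem IsBalanced.exists_intCycle {c : G.H → ℝ} (hc : G.IsBalanced c) (hc0 : c ≠ 0) :
    ∃ d : G.H → ℤ, G.IsBalanced d ∧ d ≠ 0 ∧ ∀ h, d h ≠ 0 → c h ≠ 0 := by
  obtain ⟨x, hx⟩ : ∃ x, 0 < c x := by
    obtain ⟨y, hy⟩ := Function.ne_iff.1 hc0
    rcases (show c y ≠ 0 from hy).lt_or_gt with hy | hy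
    · exact ⟨G.bar y, by rw [hc.1]; linarith⟩
    · exact ⟨y, hy⟩
  have hbar : G.bar x ∉ {h | 0 < c h} := by simp [hc.1]; linarith
  obtain ⟨d, hd, hsupp, hdx⟩ := exists_cycle_of_reachIn (hc.reachIn_pos hx)
  refine ⟨d, hd, fun h0 => by simpa [h0] using hdx hbar, fun h hh => ?_⟩
  by_contra hch
  have hh' : G.bar h ∉ {h | 0 < c h} := by simp [hc.1, hch]
  rw [hsupp h (by simp [hch]) hh'] at hh
  rcases eq_or_ne h x with rfl | hhx
  · exact hx.ne' hch
  · by_cases hhx' : h = G.bar x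
    · subst hhx'; simp [hc.1] at hch; exact hx.ne' hch
    · exact hh (unitFlow_apply_of_ne hhx hhx')

variable (G) in
def IsAcyclic (T : Set G.H) : Prop :=
  ∀ c : G.H → ℝ, G.IsBalanced c → (∀ h ∉ T, c h = 0) → c = 0

section Acyclic

variable {T : Set G.H}

theorem IsLengthFunction.barClosed_setOf_lt_half {lam : G.H → ℝ} (hlam : G.IsLengthFunction lam) :
    G.BarClosed {h | lam h < 1/2} := fun h hh => by
  change lam (G.bar h) < 1/2
  rwa [hlam.2.1]

theorem IsLengthFunction.isAcyclic_setOf_lt_half {lam : G.H → ℝ} (hlam : G.IsLengthFunction lam) :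
    G.IsAcyclic {h | lam h < 1/2} := by
  intro c hc hsupp
  by_contra hc0
  obtain ⟨d, hd, hd0, hdc⟩ := hc.exists_intCycle hc0
  obtain ⟨e, hde, hlame⟩ := hlam.2.2 d hd hd0
  have hlt : lam e < 1/2 := by_contra fun he => hdc e hde (hsupp e he)
  exact hlt.ne hlame

theorem IsAcyclic.eq_zero {W : Type*} [AddCommGroup W] [Module ℝ W] (hT : G.IsAcyclic T)
    {d : G.H → W} (hd : G.IsBalanced d) (hsupp : ∀ h ∉ T, d h = 0) : d = 0 := by
  funext h
  refine (Module.forall_dual_apply_eq_zero_iff ℝ (d h)).1 fun φ => ?_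
  exact congrFun (hT _ (hd.map φ.toAddMonoidHom) fun h' hh' => by simp [hsupp h' hh']) h

theorem IsAcyclic.not_reachIn (hT : G.BarClosed T) (hacyc : G.IsAcyclic T) {x : G.H} (hx : x ∈ T) :
    ¬ G.ReachIn (G.deleteEdge T x) (G.tar x) (G.src x) := fun h => by
  obtain ⟨c, hc, hsupp, -⟩ := exists_cycle_of_reachIn h
  have hcx : c x = 1 := by
    rw [hsupp x (fun hx' => hx'.2.1 rfl) (fun hx' => hx'.2.2 rfl), unitFlow_self]
  have hc0 := hacyc _ (hc.map (Int.castAddHom ℝ)) fun y hy => by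
    have hyx : y ≠ x := by rintro rfl; exact hy hx
    have hyx' : y ≠ G.bar x := by rintro rfl; exact hy (hT _ hx)
    simp [hsupp y (fun hy' => hy hy'.1) (fun hy' => hy (by simpa using hT _ hy'.1)),
      unitFlow_apply_of_ne hyx hyx']
  simpa [hcx] using congrFun hc0 x

/-- A cycle through the new edge would cross the cut around the component of `tar x` only
along `x`. -/
theorem IsAcyclic.insert_edge (hT : G.BarClosed T) (hacyc : G.IsAcyclic T) {x : G.H}
    (hx : ¬ G.ReachIn T (G.tar x) (G.src x)) : G.IsAcyclic (insert x (insert (G.bar x) T)) := by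
  classical
  intro c hc hsupp
  have hcx : c x = 0 := by
    rw [← sum_inflow_reachIn hc.1 reachIn_refl hx]
    · exact Finset.sum_eq_zero fun v _ => hc.inflow_eq_zero v
    · intro h hhx hbar _ hh
      refine hsupp h ?_
      simp only [Set.mem_insert_iff, not_or]
      refine ⟨hhx, ?_, fun hT' => hbar (hT h hT')⟩
      rintro rfl
      exact hh (by simpa using reachIn_refl)
  refine hacyc c hc fun h hh => ?_
  by_cases hhx : h = x
  · rw [hhx, hcx]
  by_cases hhx' : h = G.bar x
  · rw [hhx', hc.1, hcx, neg_zero]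
  exact hsupp h (by simp [hhx, hhx', hh])

theorem Connected.exists_spanning_acyclic_superset (hconn : G.Connected) {S : Set G.H}
    (hS : G.BarClosed S) (hSa : G.IsAcyclic S) :
    ∃ T, S ⊆ T ∧ G.BarClosed T ∧ G.IsAcyclic T ∧ ∀ v w, G.ReachIn T v w := by
  obtain ⟨T, ⟨hST, hT, hacyc⟩, hmax⟩ := Set.Finite.exists_maximal
    (s := {T | S ⊆ T ∧ G.BarClosed T ∧ G.IsAcyclic T}) (Set.toFinite _) ⟨S, subset_rfl, hS, hSa⟩
  have hstep (x : G.H) : G.ReachIn T (G.src x) (G.tar x) := by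
    by_contra hx
    have hsub : insert x (insert (G.bar x) T) ⊆ T :=
      hmax ⟨hST.trans ((Set.subset_insert _ _).trans (Set.subset_insert _ _)),
        hT.insert_edge x, hacyc.insert_edge hT fun h => hx (h.symm hT)⟩
        ((Set.subset_insert _ _).trans (Set.subset_insert _ _))
    exact hx (reachIn_src_tar (hsub (Set.mem_insert _ _)))
  exact ⟨T, hST, hT, hacyc, fun v w => (hconn v w).of_forall_step fun x _ => hstep x⟩

end Acyclic

variable (G) in
/-- For acyclic `T` this determines `z`: it is the fundamental cycle of `f ∉ T`. -/
def IsFundamentalCycle (T : Set G.H) (f : G.H) (z : G.H → ℤ) : Prop :=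
  G.IsBalanced z ∧ ∀ j ∉ T, z j = G.unitFlow f j

theorem BarClosed.exists_isFundamentalCycle {T : Set G.H} (hT : G.BarClosed T)
    (hspan : ∀ v w, G.ReachIn T v w) (f : G.H) : ∃ z, G.IsFundamentalCycle T f z := by
  obtain ⟨c, hc, hsupp, -⟩ := exists_cycle_of_reachIn (hspan (G.tar f) (G.src f))
  exact ⟨c, hc, fun j hj => hsupp j hj fun h => hj (by simpa using hT _ h)⟩

namespace IsFundamentalCycle

variable {T : Set G.H} {f : G.H} {z : G.H → ℤ}

theorem neg (hz : G.IsFundamentalCycle T f z) : G.IsFundamentalCycle T (G.bar f) (-z) :=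
  ⟨hz.1.map (-AddMonoidHom.id ℤ), fun j hj => by simp [hz.2 j hj, unitFlow_bar]⟩

theorem mem_or_eq (hz : G.IsFundamentalCycle T f z) {e : G.H} (he : 1 ≤ z e) : e ∈ T ∨ e = f :=
  or_iff_not_imp_left.2 fun heT => eq_of_one_le_unitFlow (hz.2 e heT ▸ he)

variable (hT : G.BarClosed T) (hacyc : G.IsAcyclic T) (hf : f ∉ T)
include hT hacyc hf

/-- Apply the cut formula to `z` minus the unit flow of `f`: it lives on `T` and enters the side
of `tar y` only through `y`. -/
theorem reachIn_tar_src (hz : G.IsFundamentalCycle T f z) {y : G.H} (hy : y ∈ T)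
    (hzy : 1 ≤ z y) : G.ReachIn (G.deleteEdge T y) (G.tar y) (G.src f) := by
  classical
  set t := z - G.unitFlow f
  have ht : ∀ h, t (G.bar h) = -t h := fun h => by
    simp only [t, Pi.sub_apply, hz.1.1, unitFlow_apply_bar]
    abel
  have hcut := sum_inflow_reachIn ht (A := G.deleteEdge T y) reachIn_refl
    (hacyc.not_reachIn hT hy) fun h hhy hbar _ hh => by
      have hhT : h ∉ T := fun hhT => by
        by_cases hhy' : G.bar h = y
        · rw [bar_eq_iff] at hhy'
          subst hhy'
          exact hh (by simpa using reachIn_refl)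
        · exact hbar ⟨hT h hhT, hhy', fun h' => hhy (bar_inj.1 h')⟩
      simp [t, hz.2 h hhT]
  have hinflow (v : G.V) :
      G.inflow t v = (if G.src f = v then 1 else 0) - (if G.tar f = v then 1 else 0) := by
    rw [inflow_sub, hz.1.inflow_eq_zero, inflow_unitFlow]
    abel
  have hty : t y = z y := by
    have hyf : y ≠ f := by rintro rfl; exact hf hy
    have hyf' : y ≠ G.bar f := by rintro rfl; exact hf (by simpa using hT _ hy)
    simp [t, unitFlow_apply_of_ne hyf hyf']
  rw [Finset.sum_congr rfl fun v _ => hinflow v, Finset.sum_sub_distrib, Finset.sum_ite_eq,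
    Finset.sum_ite_eq, hty] at hcut
  by_contra hsf
  simp only [Finset.mem_filter, Finset.mem_univ, true_and, hsf, if_false] at hcut
  split_ifs at hcut <;> omega

theorem not_reachIn_src_src_of_mem (hz : G.IsFundamentalCycle T f z) {y : G.H} (hy : y ∈ T)
    (hzy : 1 ≤ z y) : ¬ G.ReachIn (G.deleteEdge T y) (G.src f) (G.src y) := fun h =>
  hacyc.not_reachIn hT hy ((hz.reachIn_tar_src hT hacyc hf hy hzy).trans h)

/-- The walk from `src f` to `tar e` inside the side `X` of `tar e` in `T - e` avoids `e'`, whose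
ends lie outside `X`; so `src e` lies on the side of `tar e'` in `T - e'`, and the walk from
`src e` to `src e'` closes a cycle through `e'`. -/
theorem not_reachIn_of_mem_of_mem (hz : G.IsFundamentalCycle T f z) {e e' : G.H} (he : e ∈ T)
    (he' : e' ∈ T) (hne : e ≠ e') (hze : 1 ≤ z e) (hze' : 1 ≤ z e') :
    ¬ G.ReachIn (G.deleteEdge (G.deleteEdge T e) e') (G.src e) (G.src e') := by
  intro hp
  have hbe : G.bar e ∈ G.deleteEdge T e' :=
    ⟨hT _ he, hz.1.bar_ne_of_pos (by omega) (by omega), fun h => hne (bar_inj.1 h)⟩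
  have hbe' : G.bar e' ∈ G.deleteEdge T e :=
    ⟨hT _ he', hz.1.bar_ne_of_pos (by omega) (by omega), fun h => hne (bar_inj.1 h).symm⟩
  have hX := hz.reachIn_tar_src hT hacyc hf he hze
  have hY := hz.reachIn_tar_src hT hacyc hf he' hze'
  have hXsrc : ¬ G.ReachIn (G.deleteEdge T e) (G.tar e) (G.src e') := fun h =>
    hacyc.not_reachIn hT he (h.trans ((hp.mono fun _ h => h.1).symm (hT.deleteEdge e)))
  have hXtar : ¬ G.ReachIn (G.deleteEdge T e) (G.tar e) (G.tar e') := fun h =>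
    hXsrc (h.tail_bar hbe')
  have hfe : G.ReachIn (G.deleteEdge T e') (G.src f) (G.tar e) :=
    (hX.symm (hT.deleteEdge e)).mono_of_reachIn fun x hx hsx =>
      ⟨hx.1, fun hxe => hXsrc (hxe ▸ hX.trans hsx),
        fun hxe => hXtar (by simpa [hxe] using hX.trans hsx)⟩
  exact hacyc.not_reachIn hT he'
    (((hY.trans hfe).tail_bar hbe).trans (hp.mono fun _ h => ⟨h.1.1, h.2⟩))

theorem not_reachIn (hz : G.IsFundamentalCycle T f z) {e e' : G.H} (hne : e ≠ e')
    (hze : 1 ≤ z e) (hze' : 1 ≤ z e') :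
    ¬ G.ReachIn (G.deleteEdge (G.deleteEdge T e) e') (G.src e) (G.src e') := by
  intro hp
  rcases hz.mem_or_eq hze with he | rfl <;> rcases hz.mem_or_eq hze' with he' | rfl
  · exact hz.not_reachIn_of_mem_of_mem hT hacyc hf he he' hne hze hze' hp
  · exact hz.not_reachIn_src_src_of_mem hT hacyc hf he hze
      ((hp.symm ((hT.deleteEdge e).deleteEdge _)).mono fun _ h => h.1)
  · exact hz.not_reachIn_src_src_of_mem hT hacyc hf he' hze' (hp.mono fun _ h => ⟨h.1.1, h.2⟩)
  · exact hne rfl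

theorem mul_nonpos (hz : G.IsFundamentalCycle T f z) {e e' : G.H} (hne : e ≠ e')
    (hp : G.ReachIn (G.deleteEdge (G.deleteEdge T e) e') (G.src e) (G.src e')) :
    z e * z e' ≤ 0 := by
  by_contra! hpos
  rcases mul_pos_iff.1 hpos with ⟨h₁, h₂⟩ | ⟨h₁, h₂⟩
  · exact hz.not_reachIn hT hacyc hf hne (by omega) (by omega) hp
  · exact hz.neg.not_reachIn hT hacyc (fun h => hf (by simpa using hT _ h)) hne
      (by simp only [Pi.neg_apply]; omega) (by simp only [Pi.neg_apply]; omega) hp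

end IsFundamentalCycle

variable (G) in
def IsHalfEdgeChoice (T : Set G.H) (O : Finset G.H) : Prop :=
  (∀ k ∈ O, k ∉ T) ∧ (∀ k ∈ O, G.bar k ∉ O) ∧ ∀ h ∉ T, h ∈ O ∨ G.bar h ∈ O

theorem BarClosed.exists_isHalfEdgeChoice {T : Set G.H} (hT : G.BarClosed T) :
    ∃ O, G.IsHalfEdgeChoice T O := by
  classical
  let : LinearOrder G.H := LinearOrder.lift' _ (Fintype.equivFin G.H).injective
  refine ⟨univ.filter fun h => h ∉ T ∧ h < G.bar h, fun k hk => (Finset.mem_filter.1 hk).2.1,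
    fun k hk hbk => ?_, fun h hh => ?_⟩
  · simp only [Finset.mem_filter, Finset.mem_univ, true_and, bar_bar] at hk hbk
    exact lt_asymm hk.2 hbk.2
  · rcases lt_or_gt_of_ne (G.bar_ne h).symm with hlt | hlt
    · left
      simp [hh, hlt]
    · have hbh : G.bar h ∉ T := fun hb => hh (by simpa using hT _ hb)
      right
      simp [hlt, hbh]

namespace IsHalfEdgeChoice

variable {T : Set G.H} {O : Finset G.H}

theorem fundamentalCycle_apply (hO : G.IsHalfEdgeChoice T O) {k j : G.H} {z : G.H → ℤ}
    (hz : G.IsFundamentalCycle T k z) (hk : k ∈ O) (hj : j ∈ O) :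
    z j = if j = k then 1 else 0 := by
  rw [hz.2 j (hO.1 j hj)]
  split_ifs with hjk
  · rw [hjk, unitFlow_self]
  · exact unitFlow_apply_of_ne hjk fun h => hO.2.1 k hk (h ▸ hj)

theorem linearIndependent (hO : G.IsHalfEdgeChoice T O) {z : O → G.H → ℤ}
    (hz : ∀ k : O, G.IsFundamentalCycle T k (z k)) :
    LinearIndependent ℝ fun k : O => fun h => (z k h : ℝ) := by
  refine LinearIndependent.of_comp (LinearMap.funLeft ℝ ℝ ((↑) : O → G.H)) ?_
  convert (Pi.basisFun ℝ O).linearIndependent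
  funext k j
  rw [Function.comp_apply, LinearMap.funLeft_apply, Pi.basisFun_apply, Pi.single_apply,
    hO.fundamentalCycle_apply (hz k) k.2 j.2]
  simp only [Subtype.coe_inj, Int.cast_ite, Int.cast_one, Int.cast_zero]

theorem eq_sum_smul {W : Type*} [AddCommGroup W] [Module ℝ W] (hO : G.IsHalfEdgeChoice T O)
    (hacyc : G.IsAcyclic T) {z : O → G.H → ℤ} (hz : ∀ k : O, G.IsFundamentalCycle T k (z k))
    {ω : G.H → W} (hω : G.IsBalanced ω) (x : G.H) : ω x = ∑ k : O, (z k x : ℝ) • ω k := by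
  set d : G.H → W := ω - ∑ k : O, fun h => (z k h : ℝ) • ω k
  have hd : G.IsBalanced d :=
    (G.Omega W).sub_mem hω ((G.Omega W).sum_mem fun k _ => (hz k).1.intCast_smul (ω k))
  have hdO : ∀ j ∈ O, d j = 0 := fun j hj => by
    have hsum : ∑ k : O, (z k j : ℝ) • ω k = ω j := by
      rw [Finset.sum_eq_single ⟨j, hj⟩ (fun k _ hk => ?_) (by simp)]
      · simp [hO.fundamentalCycle_apply (hz ⟨j, hj⟩) hj hj]
      · have hjk : j ≠ k := fun h => hk (Subtype.ext h.symm)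
        simp [hO.fundamentalCycle_apply (hz k) k.2 hj, hjk]
    simp only [d, Pi.sub_apply, Finset.sum_apply, hsum, sub_self]
  have hoff : ∀ h ∉ T, d h = 0 := fun h hh => by
    rcases hO.2.2 h hh with hO' | hO'
    · exact hdO h hO'
    · rw [← bar_bar h, hd.1, hdO _ hO', neg_zero]
  exact sub_eq_zero.1 (by simpa [d, Finset.sum_apply] using congrFun (hacyc.eq_zero hd hoff) x)

end IsHalfEdgeChoice

end FinGraph

theorem exists_good_scalar_product_general (G : FinGraph) (hconn : G.Connected)
    (lam : G.H → ℝ) (hlam : G.IsLengthFunction lam)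
    (ω : G.H → (G.H → ℝ)) (hω : ω ∈ G.Omega (G.H → ℝ))
    (hcanon : ∀ c ∈ G.cycles,
      ∑ e : G.H, ((c e : ℝ) * lam e) • ω e = (fun h => (c h : ℝ))) :
    ∃ B : (G.H → ℝ) →ₗ[ℝ] (G.H → ℝ) →ₗ[ℝ] ℝ,
      (∀ x y, B x y = B y x) ∧
      (∀ x, 0 ≤ B x x) ∧
      (∀ x ∈ Submodule.span ℝ {x : G.H → ℝ | ∃ c ∈ G.cycles, x = fun h => (c h : ℝ)},
        x ≠ 0 → 0 < B x x) ∧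
      (∀ e e' : G.H, e ≠ e' →
        (G.src e = G.src e' ∨
          G.ReachIn {h | h ∉ ({e, G.bar e, e', G.bar e'} : Set G.H) ∧ lam h < 1/2}
            (G.src e) (G.src e')) →
        B (ω e) (ω e') ≤ 0) := by
  obtain ⟨T, hST, hT, hacyc, hspan⟩ := hconn.exists_spanning_acyclic_superset
    hlam.barClosed_setOf_lt_half hlam.isAcyclic_setOf_lt_half
  obtain ⟨O, hO⟩ := hT.exists_isHalfEdgeChoice
  choose z hz using fun k : O => hT.exists_isFundamentalCycle hspan k
  have hdecomp := hO.eq_sum_smul hacyc hz hω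
  set C := {x : G.H → ℝ | ∃ c ∈ G.cycles, x = fun h => (c h : ℝ)}
  have hcycles : Submodule.span ℝ C ≤ Submodule.span ℝ (Set.range fun k : O => ω k) := by
    refine Submodule.span_le.2 ?_
    rintro _ ⟨c, hc, rfl⟩
    rw [← hcanon c hc]
    exact Submodule.sum_mem _ fun e _ => Submodule.smul_mem _ _
      ((Submodule.mem_span_range_iff_exists_fun ℝ).2 ⟨fun k => (z k e : ℝ), (hdecomp e).symm⟩)
  have hind : LinearIndependent ℝ fun k : O => ω k :=
    (hO.linearIndependent hz).of_span_le <| (Submodule.span_mono (s := _) (t := C) <|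
      Set.range_subset_iff.2 fun k => ⟨z k, (hz k).1, rfl⟩).trans hcycles
  obtain ⟨B, hsymm, hnonneg, hpos, horth⟩ := hind.exists_bilin_orthonormal
  refine ⟨B, hsymm, hnonneg, fun x hx => hpos x (hcycles hx), fun e e' hne hpath => ?_⟩
  have hpath' : G.ReachIn (G.deleteEdge (G.deleteEdge T e) e') (G.src e) (G.src e') :=
    hpath.elim (fun h => h ▸ Relation.ReflTransGen.refl)
      (·.mono (G.subset_deleteEdge_deleteEdge hST e e'))
  rw [hdecomp e, hdecomp e', horth]
  exact Finset.sum_nonpos fun k _ => mod_cast (hz k).mul_nonpos hT hacyc (hO.1 k k.2) hne hpath'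

/-- there is a scalar product on `H₁(Γ,ℝ)` (a symmetric positive
semidefinite bilinear form on the ambient space, positive definite on the span of
the cycles) such that `⟨ω(e), ω(e')⟩ ≤ 0` for distinct half-edges `e, e'` which
either have the same source or whose sources are joined by a path disjoint from
`e, e'` all of whose edges have less than maximal length. -/
theorem exists_good_scalar_product (G : FinGraph) (hconn : G.Connected)
    (hnosep : ∀ e : G.H, ¬ G.IsSeparating e)
    (lam : G.H → ℝ) (hlam : G.IsLengthFunction lam)
    (ω : G.H → (G.H → ℝ)) (hω : ω ∈ G.Omega (G.H → ℝ))
    (hcanon : ∀ c ∈ G.cycles,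
      ∑ e : G.H, ((c e : ℝ) * lam e) • ω e = (fun h => (c h : ℝ))) :
    ∃ B : (G.H → ℝ) →ₗ[ℝ] (G.H → ℝ) →ₗ[ℝ] ℝ,
      (∀ x y, B x y = B y x) ∧
      (∀ x, 0 ≤ B x x) ∧
      (∀ x ∈ Submodule.span ℝ {x : G.H → ℝ | ∃ c ∈ G.cycles, x = fun h => (c h : ℝ)},
        x ≠ 0 → 0 < B x x) ∧
      (∀ e e' : G.H, e ≠ e' →
        (G.src e = G.src e' ∨
          G.ReachIn {h | h ∉ ({e, G.bar e, e', G.bar e'} : Set G.H) ∧ lam h < 1/2}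
            (G.src e) (G.src e')) →
        B (ω e) (ω e') ≤ 0) :=
  exists_good_scalar_product_general G hconn lam hlam ω hω hcanon
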